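/- arXiv:2007.09449 — 2 statements merged into one kernel-verified Lean document; each statement's English description precedes it below -/
import Mathlib

section
/- Let (S, m_S) be a pair consisting of an étale algebra S over a local ring (R, m) and a prime m_S of S lying over m with k(m_S) = k(m), and suppose S is a domain. Then the natural map S → R^h to the Henselization of R is injective. -/
open IsLocalRing Polynomial TensorProduct

universe u

theorem valSub_root_aux {K : Type u} [Field K] [IsAlgClosed K]
    (A : ValuationSubring K) : ∀ (n : ℕ) (f : Polynomial A), f.natDegree ≤ n → f.Monic →
    ∀ a₀ : A, f.eval a₀ ∈ maximalIdeal A → ∃ a : A, f.IsRoot a ∧ a - a₀ ∈ maximalIdeal A := by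
  intro n
  induction n with
  | zero =>
    intro f hdeg hf a₀ ha₀
    exfalso
    rw [(Polynomial.Monic.natDegree_eq_zero hf).mp (Nat.le_zero.mp hdeg)] at ha₀
    simp at ha₀
  | succ n ih =>
    intro f hdeg hf a₀ ha₀
    by_cases h0 : f.natDegree = 0
    · exfalso
      rw [(Polynomial.Monic.natDegree_eq_zero hf).mp h0] at ha₀
      simp at ha₀
    · have hmap : (f.map (algebraMap A K)).degree ≠ 0 := by
        rw [Polynomial.degree_map_eq_of_leadingCoeff_ne_zero]
        · simpa [Polynomial.degree_eq_natDegree (Polynomial.Monic.ne_zero hf)] using h0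
        · simp [hf.leadingCoeff]
      obtain ⟨c, hc⟩ := IsAlgClosed.exists_root _ hmap
      -- c is integral over A, hence in A
      have hcA : c ∈ A := by
        have hint : IsIntegral A.toLocalSubring.toSubring c := by
          refine ⟨f, hf, ?_⟩
          show eval₂ (algebraMap (↥A) K) c f = 0
          rw [← Polynomial.eval_map]; exact hc
        exact LocalSubring.mem_of_isMax_of_isIntegral A.isMax_toLocalSubring hint
      set b : A := ⟨c, hcA⟩ with hb
      have hfb : f.eval b = 0 := by
        have : (algebraMap A K) (f.eval b) = 0 := by
          rw [← Polynomial.eval₂_at_apply, ← Polynomial.eval_map]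
          simpa using hc
        exact Subtype.ext (by simpa using this)
      -- factor f = (X - C b) * q
      set q := f /ₘ (X - C b) with hq
      have hfact : (X - C b) * q = f := (Polynomial.mul_divByMonic_eq_iff_isRoot).mpr hfb
      have hqmonic : q.Monic := by
        have := hf
        rw [← hfact] at this
        exact (Polynomial.monic_X_sub_C b).of_mul_monic_left this
      have hqdeg : q.natDegree ≤ n := by
        have hfne : f ≠ 0 := hf.ne_zero
        have : f.natDegree = 1 + q.natDegree := by
          rw [← hfact, Polynomial.natDegree_mul (Polynomial.monic_X_sub_C b).ne_zero hqmonic.ne_zero,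
            Polynomial.natDegree_X_sub_C]
        omega
      have heval : (a₀ - b) * q.eval a₀ ∈ maximalIdeal A := by
        have : f.eval a₀ = (a₀ - b) * q.eval a₀ := by
          rw [← hfact]; simp
        rwa [← this]
      rcases ((IsLocalRing.maximalIdeal.isMaximal A).isPrime.mem_or_mem heval) with hcase | hcase
      · exact ⟨b, hfb, by simpa using (neg_mem hcase : -(a₀ - b) ∈ _)⟩
      · obtain ⟨a, ha, ha'⟩ := ih q hqdeg hqmonic a₀ hcase
        refine ⟨a, ?_, ha'⟩
        show f.eval a = 0
        rw [← hfact]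
        simp [Polynomial.IsRoot.def.mp ha]

theorem valuationSubring_henselian {K : Type u} [Field K] [IsAlgClosed K]
    (A : ValuationSubring K) : HenselianLocalRing A := by
  constructor
  intro f hf a₀ ha₀ _
  exact valSub_root_aux A f.natDegree f le_rfl hf a₀ ha₀

/-- The kernel of a section of a formally unramified, finitely presented algebra is
generated by an idempotent. -/
theorem ker_section_eq_span_idem {T B : Type u} [CommRing T] [CommRing B] [Algebra T B]
    [Algebra.FormallyUnramified T B] [Algebra.FinitePresentation T B] (μ : B →ₐ[T] T) :
    ∃ e : B, IsIdempotentElem e ∧ RingHom.ker (μ : B →+* T) = Ideal.span {e} := by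
  set I : Ideal B := RingHom.ker (μ : B →+* T) with hI
  have hsurj : Function.Surjective μ := fun t => ⟨algebraMap T B t, μ.commutes t⟩
  have hfg : I.FG := by
    have := Algebra.FinitePresentation.ker_fG_of_surjective μ hsurj
    exact this
  -- I = I^2 via formal unramifiedness
  have hsq : I ^ 2 = I := by
    refine le_antisymm ?_ ?_
    · rw [pow_two]; exact Ideal.mul_le_left
    intro x hx
    -- two algebra maps B → B ⧸ I^2 agreeing mod the square-zero ideal I/I^2
    set J : Ideal (B ⧸ I ^ 2) := I.map (Ideal.Quotient.mk (I ^ 2)) with hJ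
    have hJsq : J ^ 2 = ⊥ := by
      rw [hJ, ← Ideal.map_pow, Ideal.map_quotient_self]
    set q₁ : B →ₐ[T] B ⧸ I ^ 2 := Ideal.Quotient.mkₐ T (I ^ 2) with hq₁
    set q₂ : B →ₐ[T] B ⧸ I ^ 2 :=
      ((Ideal.Quotient.mkₐ T (I ^ 2)).comp (IsScalarTower.toAlgHom T T B)).comp μ with hq₂
    have key : q₁ = q₂ := by
      apply Algebra.FormallyUnramified.comp_injective (R := T) (A := B) J hJsq
      ext b
      show Ideal.Quotient.mk J (q₁ b) = Ideal.Quotient.mk J (q₂ b)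
      rw [Ideal.Quotient.eq]
      have hb : b - algebraMap T B (μ b) ∈ I := by
        rw [hI, RingHom.mem_ker, map_sub]
        simp
      have : q₁ b - q₂ b = Ideal.Quotient.mk (I ^ 2) (b - algebraMap T B (μ b)) := by
        simp [hq₁, hq₂, map_sub]
      rw [this]
      exact Ideal.mem_map_of_mem _ hb
    have hx0 : μ x = 0 := by rwa [← RingHom.mem_ker]
    have h2 : Ideal.Quotient.mk (I ^ 2) x = Ideal.Quotient.mk (I ^ 2) (algebraMap T B (μ x)) :=
      congrFun (congrArg (fun (ψ : B →ₐ[T] B ⧸ I ^ 2) => (ψ : B → B ⧸ I ^ 2)) key) x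
    rw [hx0, map_zero, map_zero] at h2
    exact Ideal.Quotient.eq_zero_iff_mem.mp h2
  have hidem : IsIdempotentElem I := by
    show I * I = I
    rwa [← pow_two]
  obtain ⟨e, he, hspan⟩ := (Ideal.isIdempotentElem_iff_of_fg I hfg).mp hidem
  exact ⟨e, he, by rw [hspan]⟩

/-- Two sections of a formally unramified finitely presented algebra over a local ring which
agree modulo the maximal ideal are equal. -/
theorem section_ext {T B : Type u} [CommRing T] [CommRing B] [Algebra T B] [IsLocalRing T]
    [Algebra.FormallyUnramified T B] [Algebra.FinitePresentation T B]
    (μ₁ μ₂ : B →ₐ[T] T) (hmod : ∀ b, μ₁ b - μ₂ b ∈ maximalIdeal T) : μ₁ = μ₂ := by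
  obtain ⟨e₁, he₁, hk₁⟩ := ker_section_eq_span_idem μ₁
  -- μ₂ e₁ is an idempotent in the maximal ideal, hence 0
  have hidem : IsIdempotentElem (μ₂ e₁) := by
    show μ₂ e₁ * μ₂ e₁ = μ₂ e₁
    rw [← map_mul, he₁.eq]
  have hmem : μ₂ e₁ ∈ maximalIdeal T := by
    have h1 : μ₁ e₁ = 0 := by
      have : e₁ ∈ RingHom.ker (μ₁ : B →+* T) := by
        rw [hk₁]; exact Ideal.subset_span rfl
      exact RingHom.mem_ker.mp this
    have := hmod e₁
    rwa [h1, zero_sub, neg_mem_iff] at this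
  have h0 : μ₂ e₁ = 0 := by
    have hunit : IsUnit (1 - μ₂ e₁) := by
      rw [← IsLocalRing.notMem_maximalIdeal] at *
      intro hmem1
      exact (IsLocalRing.maximalIdeal.isMaximal T).ne_top
        (Ideal.eq_top_iff_one _ |>.mpr (by simpa using add_mem hmem1 hmem))
    have hz : (1 - μ₂ e₁) * μ₂ e₁ = (1 - μ₂ e₁) * 0 := by
      rw [mul_zero, sub_mul, one_mul, hidem.eq, sub_self]
    exact hunit.mul_left_cancel hz
  -- hence ker μ₁ ⊆ ker μ₂, and μ₂ = μ₁
  ext b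
  have hb : b - algebraMap T B (μ₁ b) ∈ RingHom.ker (μ₁ : B →+* T) := by
    show (μ₁ : B →+* T) _ = 0
    simp [map_sub]
  rw [hk₁, Ideal.mem_span_singleton] at hb
  obtain ⟨c, hc⟩ := hb
  have : μ₂ (b - algebraMap T B (μ₁ b)) = 0 := by
    rw [hc, map_mul, h0, zero_mul]
  rw [map_sub, μ₂.commutes, sub_eq_zero] at this
  simpa using this.symm

theorem unramified_hom_ext {R S T : Type u} [CommRing R] [CommRing S] [CommRing T]
    [Algebra R S] [Algebra.Etale R S] [IsLocalRing T]
    (f₁ f₂ : S →+* T) (g : R →+* T)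
    (h₁ : f₁.comp (algebraMap R S) = g) (h₂ : f₂.comp (algebraMap R S) = g)
    (hmod : ∀ s, f₁ s - f₂ s ∈ maximalIdeal T) : f₁ = f₂ := by
  letI : Algebra R T := g.toAlgebra
  have halg : algebraMap R T = g := rfl
  let F₁ : S →ₐ[R] T := ⟨f₁, fun r => by rw [halg, ← h₁]; rfl⟩
  let F₂ : S →ₐ[R] T := ⟨f₂, fun r => by rw [halg, ← h₂]; rfl⟩
  let μ₁ : T ⊗[R] S →ₐ[T] T :=
    Algebra.TensorProduct.lift (AlgHom.id T T) F₁ (fun _ _ => Commute.all _ _)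
  let μ₂ : T ⊗[R] S →ₐ[T] T :=
    Algebra.TensorProduct.lift (AlgHom.id T T) F₂ (fun _ _ => Commute.all _ _)
  have hmodB : ∀ b : T ⊗[R] S, μ₁ b - μ₂ b ∈ maximalIdeal T := by
    intro b
    induction b with
    | zero => simpa using (maximalIdeal T).zero_mem
    | tmul t s =>
      have : μ₁ (t ⊗ₜ[R] s) - μ₂ (t ⊗ₜ[R] s) = t * (f₁ s - f₂ s) := by
        simp [μ₁, μ₂, Algebra.TensorProduct.lift_tmul, mul_sub]
        rfl
      rw [this]
      exact Ideal.mul_mem_left _ _ (hmod s)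
    | add x y hx hy =>
      have : μ₁ (x + y) - μ₂ (x + y) = (μ₁ x - μ₂ x) + (μ₁ y - μ₂ y) := by
        rw [map_add, map_add]; ring
      rw [this]
      exact Ideal.add_mem _ hx hy
  have key : μ₁ = μ₂ := section_ext μ₁ μ₂ hmodB
  ext s
  have := congrFun (congrArg (fun (ψ : T ⊗[R] S →ₐ[T] T) => (ψ : T ⊗[R] S → T)) key) (1 ⊗ₜ[R] s)
  simpa [μ₁, μ₂, Algebra.TensorProduct.lift_tmul, F₁, F₂] using this

/-- Let `(R, 𝔪)` be a local ring and `R^h` its Henselization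
(characterized here by its universal property: `R^h` is a Henselian local `R`-algebra with
local structure map, initial among Henselian local rings with local maps from `R`).  Let
`(S, 𝔪_S)` be a pair consisting of an étale `R`-algebra `S` which is a domain and a prime
`𝔪_S` of `S` lying over `𝔪` with trivial residue field extension.  Then the natural map
`S → R^h` (i.e. any `R`-algebra map pulling the maximal ideal of `R^h` back to `𝔪_S`) is
injective. -/
theorem stmt_11 {R : Type u} [CommRing R] [IsLocalRing R]
    {Rh : Type u} [CommRing Rh] [IsLocalRing Rh] [HenselianLocalRing Rh] [Algebra R Rh]
    (hloc : IsLocalHom (algebraMap R Rh))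
    (huniv : ∀ (T : Type u) [CommRing T] [IsLocalRing T] [HenselianLocalRing T]
      (g : R →+* T), IsLocalHom g →
      ∃! h : Rh →+* T, IsLocalHom h ∧ h.comp (algebraMap R Rh) = g)
    {S : Type u} [CommRing S] [IsDomain S] [Algebra R S] [Algebra.Etale R S]
    (mS : Ideal S) (hmS : mS.IsPrime)
    (hcomap : mS.comap (algebraMap R S) = maximalIdeal R)
    (hres : Function.Bijective (Ideal.quotientMap mS (algebraMap R S) hcomap.ge))
    (φ : S →+* Rh) (hφ : φ.comp (algebraMap R S) = algebraMap R Rh)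
    (hφm : (maximalIdeal Rh).comap φ = mS) :
    Function.Injective φ := by
  classical
  haveI := hmS
  -- the big algebraically closed field
  let K : Type u := AlgebraicClosure (FractionRing S)
  let j : S →+* K := (algebraMap (FractionRing S) K).comp (algebraMap S (FractionRing S))
  have hj : Function.Injective j :=
    (algebraMap (FractionRing S) K).injective.comp (IsFractionRing.injective S (FractionRing S))
  -- localize at mS
  let L : Type u := Localization.AtPrime mS
  have hunits : ∀ y : mS.primeCompl, IsUnit (j y) := by
    rintro ⟨y, hy⟩
    have hy0 : y ≠ 0 := fun h => hy (h ▸ mS.zero_mem)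
    exact isUnit_iff_ne_zero.mpr fun h => hy0 (hj (by simpa using h))
  let fL : L →+* K := IsLocalization.lift (M := mS.primeCompl) (S := L) hunits
  have hfL : fL.comp (algebraMap S L) = j := IsLocalization.lift_comp hunits
  -- dominating valuation subring
  obtain ⟨W, hmem, hWloc⟩ := IsLocalRing.exists_factor_valuationRing fL
  haveI : HenselianLocalRing W := valuationSubring_henselian W
  let fLW : L →+* W := fL.codRestrict W.toSubring hmem
  haveI : IsLocalHom fLW := hWloc
  -- the embedding ψ : S → W
  let ψ : S →+* W := fLW.comp (algebraMap S L)
  have hψinj : Function.Injective ψ := by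
    have : (W.subtype).comp ψ = j := by
      ext s
      exact RingHom.congr_fun hfL s
    intro a b hab
    apply hj
    rw [← this]
    simp [RingHom.comp_apply, hab]
  -- comap of maximal ideal of W under ψ is mS
  have hψm : (maximalIdeal W).comap ψ = mS := by
    have h1 : (maximalIdeal W).comap fLW = maximalIdeal L :=
      ((IsLocalRing.local_hom_TFAE fLW).out 0 4).mp hWloc
    have h2 : (maximalIdeal L).comap (algebraMap S L) = mS :=
      Localization.AtPrime.comap_maximalIdeal
    rw [show ψ = fLW.comp (algebraMap S L) from rfl, ← Ideal.comap_comap, h1, h2]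
  -- g : R → W, local
  let g : R →+* W := ψ.comp (algebraMap R S)
  have hgm : (maximalIdeal W).comap g = maximalIdeal R := by
    rw [show g = ψ.comp (algebraMap R S) from rfl, ← Ideal.comap_comap, hψm, hcomap]
  have hgloc : IsLocalHom g := by
    constructor
    intro a ha
    by_contra hcon
    have hmm : a ∈ maximalIdeal R := hcon
    rw [← hgm] at hmm
    exact (IsLocalRing.maximalIdeal.isMaximal W).ne_top
      ((IsLocalRing.maximalIdeal W).eq_top_of_isUnit_mem hmm ha)
  -- the universal map h : Rh → W
  obtain ⟨h, ⟨hhloc, hhcomp⟩, -⟩ := huniv W g hgloc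
  -- two maps S → W
  let f₁ : S →+* W := h.comp φ
  have h₁ : f₁.comp (algebraMap R S) = g := by
    rw [show f₁ = h.comp φ from rfl, RingHom.comp_assoc, hφ, hhcomp]
  have h₂ : ψ.comp (algebraMap R S) = g := rfl
  -- comap of maximal ideal under f₁ is mS
  have hf₁m : (maximalIdeal W).comap f₁ = mS := by
    have h1 : (maximalIdeal W).comap h = maximalIdeal Rh :=
      ((IsLocalRing.local_hom_TFAE h).out 0 4).mp hhloc
    rw [show f₁ = h.comp φ from rfl, ← Ideal.comap_comap, h1, hφm]
  -- residue congruence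
  have hmod : ∀ s : S, f₁ s - ψ s ∈ maximalIdeal W := by
    intro s
    obtain ⟨r', hr'⟩ := hres.2 (Ideal.Quotient.mk mS s)
    obtain ⟨r, rfl⟩ := Ideal.Quotient.mk_surjective r'
    rw [Ideal.quotientMap_mk] at hr'
    have hsr : s - algebraMap R S r ∈ mS := by
      rw [← Ideal.Quotient.eq] at *
      exact (hr'.symm : _)
    have hmem1 : f₁ (s - algebraMap R S r) ∈ maximalIdeal W := by
      rw [← hf₁m] at hsr; exact hsr
    have hmem2 : ψ (s - algebraMap R S r) ∈ maximalIdeal W := by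
      rw [← hψm] at hsr; exact hsr
    have : f₁ s - ψ s = f₁ (s - algebraMap R S r) - ψ (s - algebraMap R S r) := by
      rw [map_sub, map_sub]
      have : f₁ (algebraMap R S r) = ψ (algebraMap R S r) := by
        have e1 : f₁ (algebraMap R S r) = g r := by rw [← h₁]; rfl
        have e2 : ψ (algebraMap R S r) = g r := rfl
        rw [e1, e2]
      rw [this]; ring
    rw [this]
    exact Ideal.sub_mem _ hmem1 hmem2
  -- conclude
  have key : f₁ = ψ := unramified_hom_ext f₁ ψ g h₁ h₂ hmod
  intro a b hab
  apply hψinj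
  rw [← key]
  show h (φ a) = h (φ b)
  rw [hab]
end

section
/- Let A be a Noetherian normal domain with prime ideals p ⊆ m. Let Ā be the integral closure of A in a separable closure of its fraction field, and let p̄ ⊆ m̄ be a chain of primes of Ā extending p ⊆ m. Then the absolute inertia group I_{p̄} = {σ ∈ Gal(K^sep/K) : σ(p̄) = p̄ and σ(x) - x ∈ p̄ for all x ∈ Ā} is contained in the absolute inertia group I_{m̄} (defined analogously with m̄). -/
set_option maxHeartbeats 1000000
set_option synthInstance.maxHeartbeats 1000000

/-- Let `A` be a Noetherian normal domain with fraction field `K`, let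
`L` be a separable closure of `K` and `Ā` the integral closure of `A` in `L`.  Let
`p̄ ⊆ m̄` be a chain of primes of `Ā` extending a chain `p ⊆ m` of primes of `A`.  Then the
absolute inertia group `I_p̄ = {σ ∈ Gal(L/K) : σ(p̄) = p̄, σ(x) - x ∈ p̄ ∀ x ∈ Ā}` is
contained in the absolute inertia group `I_m̄`. -/
theorem stmt_12 {A : Type*} [CommRing A] [IsDomain A] [IsNoetherianRing A]
    [IsIntegrallyClosed A]
    {L : Type*} [Field L] [Algebra (FractionRing A) L]
    [IsSepClosure (FractionRing A) L]
    [Algebra A L] [IsScalarTower A (FractionRing A) L]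
    (p m : Ideal A) (hp : p.IsPrime) (hm : m.IsPrime) (hpm : p ≤ m)
    (pbar mbar : Ideal (integralClosure A L))
    (hpbar : pbar.IsPrime) (hmbar : mbar.IsPrime) (hchain : pbar ≤ mbar)
    (hpl : pbar.comap (algebraMap A (integralClosure A L)) = p)
    (hml : mbar.comap (algebraMap A (integralClosure A L)) = m) :
    {σ : L ≃ₐ[FractionRing A] L |
        (⇑σ '' (Subtype.val '' (pbar : Set (integralClosure A L))) =
          Subtype.val '' (pbar : Set (integralClosure A L))) ∧
        ∀ x : integralClosure A L,
          σ (x : L) - (x : L) ∈ Subtype.val '' (pbar : Set (integralClosure A L))} ⊆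
      {σ : L ≃ₐ[FractionRing A] L |
        (⇑σ '' (Subtype.val '' (mbar : Set (integralClosure A L))) =
          Subtype.val '' (mbar : Set (integralClosure A L))) ∧
        ∀ x : integralClosure A L,
          σ (x : L) - (x : L) ∈ Subtype.val '' (mbar : Set (integralClosure A L))} := by
  intro σ hσ
  obtain ⟨h1, h2⟩ := hσ
  constructor
  · apply Set.eq_of_subset_of_subset
    · rintro _ ⟨_, ⟨y, hy, rfl⟩, rfl⟩
      obtain ⟨z, hz, hzval⟩ := h2 y
      refine ⟨(z + y : integralClosure A L), Ideal.add_mem _ (hchain hz) hy, ?_⟩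
      have : (z : L) = σ (y : L) - (y : L) := hzval
      push_cast
      rw [this]; ring
    · rintro _ ⟨y, hy, rfl⟩
      -- need: y.val ∈ σ '' (val '' mbar)
      have hint : IsIntegral A (σ.symm (y : L)) := by
        have := y.2
        exact IsIntegral.map ((σ.symm.toAlgHom.restrictScalars A)) y.2
      set w : integralClosure A L := ⟨σ.symm (y : L), hint⟩ with hw
      obtain ⟨z, hz, hzval⟩ := h2 w
      have hσw : σ (w : L) = (y : L) := by
        simp [hw]
      have hzv : (z : L) = (y : L) - (w : L) := by
        rw [hzval, hσw]
      have hwmem : w ∈ mbar := by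
        have : w = y - z := by
          ext
          push_cast
          rw [hzv]; ring
        rw [this]
        exact Ideal.sub_mem _ hy (hchain hz)
      exact ⟨(w : L), ⟨w, hwmem, rfl⟩, hσw⟩
  · intro x
    obtain ⟨z, hz, hzval⟩ := h2 x
    exact ⟨z, hchain hz, hzval⟩
end
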